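/- arXiv:2210.07012 — 3 statements merged into one kernel-verified Lean document; each statement's English description precedes it below -/
import Mathlib

section
/- Fix an odd integer β ≥ 3, an integer D ≥ 1, and a real v_max > 0, and let Δ = 2·v_max/(β^D − 1). For every v ∈ ℝ with |v| ≤ v_max + Δ/2, the quantization error satisfies |v − q(v)| ≤ Δ/2; that is, the composition q = f_dec ∘ f_enc is a mid-tread uniform quantizer with step size Δ on the interval [−v_max − Δ/2, v_max + Δ/2]. -/
/-- Clamping of `v` to the interval `[-vmax, vmax]`. -/
noncomputable def clampR (vmax v : ℝ) : ℝ := max (-vmax) (min v vmax)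

/-- The quantization index `n(v) = ⌊(ξ/v_max)·v' + ξ + 1/2⌋` where `ξ = (β^D − 1)/2` and
`v'` is the clamped value of `v`. -/
noncomputable def qidx (β D : ℕ) (vmax v : ℝ) : ℤ :=
  ⌊(((β : ℝ) ^ D - 1) / 2 / vmax) * clampR vmax v + ((β : ℝ) ^ D - 1) / 2 + 1 / 2⌋

/-- The `i`th base-`β` digit `b_i(v) ∈ {0,…,β−1}` of the quantization index `n(v)`. -/
noncomputable def bdigit (β D : ℕ) (vmax v : ℝ) (i : ℕ) : ℕ :=
  (qidx β D vmax v).toNat / β ^ i % β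

/-- The `i`th balanced numeral `x_i(v) = b_i(v) − (β−1)/2`. -/
noncomputable def numeral (β D : ℕ) (vmax v : ℝ) (i : ℕ) : ℤ :=
  (bdigit β D vmax v i : ℤ) - ((β : ℤ) - 1) / 2

/-- The quantizer (decoder composed with encoder)
`q(v) = (v_max/ξ)·Σ_{i=0}^{D−1} x_i(v)·β^i` where `ξ = (β^D − 1)/2`. -/
noncomputable def quant (β D : ℕ) (vmax v : ℝ) : ℝ :=
  vmax / (((β : ℝ) ^ D - 1) / 2) *
    ∑ i ∈ Finset.range D, (numeral β D vmax v i : ℝ) * (β : ℝ) ^ i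

/-!
Put `Δ = 2 v_max / (β ^ D - 1)` and `y = (v' + v_max) / Δ ∈ [0, β ^ D - 1]`. The index is
`n(v) = round y`, and since the balanced numerals `x_i` are the base-`β` digits of `n(v)` shifted
by `(β - 1) / 2`, the decoder returns `q(v) = Δ · round y - v_max`, while `v' = Δ · y - v_max`.
Hence `|v' - q(v)| ≤ Δ / 2`. For `|v| ≥ v_max` the offset `y` is `0` or `β ^ D - 1`, an integer,
so `q(v) = v'` and the error is `|v| - v_max ≤ Δ / 2`.
-/

theorem Nat.sum_range_div_pow_mod_mul_pow (b m D : ℕ) :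
    ∑ i ∈ Finset.range D, m / b ^ i % b * b ^ i = m % b ^ D := by
  induction D with
  | zero => simp [Nat.mod_one]
  | succ D ih => rw [Finset.sum_range_succ, ih, Nat.mod_pow_succ, mul_comm]

theorem sum_balanced_digits_mul_pow {β n : ℕ} (D : ℕ) (hodd : Odd β) (hn : n < β ^ D) :
    ∑ i ∈ Finset.range D,
        ((((n / β ^ i % β : ℕ) : ℤ) - ((β : ℤ) - 1) / 2 : ℤ) : ℝ) * (β : ℝ) ^ i
      = n - ((β : ℝ) ^ D - 1) / 2 := by
  obtain ⟨m, rfl⟩ := hodd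
  have half : (((2 * m + 1 : ℕ) : ℤ) - 1) / 2 = m := by omega
  have digits : ∑ i ∈ Finset.range D, ((n / (2 * m + 1) ^ i % (2 * m + 1) : ℕ) : ℝ)
      * ((2 * m + 1 : ℕ) : ℝ) ^ i = n := by
    exact_mod_cast (Nat.sum_range_div_pow_mod_mul_pow _ n D).trans (Nat.mod_eq_of_lt hn)
  have geom : (∑ i ∈ Finset.range D, ((2 * m + 1 : ℕ) : ℝ) ^ i) * (2 * m)
      = ((2 * m + 1 : ℕ) : ℝ) ^ D - 1 := by
    simpa using geom_sum_mul ((2 * m + 1 : ℕ) : ℝ) D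
  simp only [half, Int.cast_sub, Int.cast_natCast, sub_mul, Finset.sum_sub_distrib, digits,
    ← Finset.mul_sum]
  linarith

theorem neg_le_clampR (vmax v : ℝ) : -vmax ≤ clampR vmax v := le_max_left _ _

section

variable {vmax : ℝ}

theorem clampR_le (hv : 0 ≤ vmax) (v : ℝ) : clampR vmax v ≤ vmax :=
  max_le (by linarith) (min_le_right _ _)

theorem clampR_of_abs_le {v : ℝ} (h : |v| ≤ vmax) : clampR vmax v = v := by
  obtain ⟨h₁, h₂⟩ := abs_le.mp h
  rw [clampR, min_eq_left h₂, max_eq_right h₁]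

theorem clampR_of_le (hv : 0 ≤ vmax) {v : ℝ} (h : vmax ≤ v) : clampR vmax v = vmax := by
  rw [clampR, min_eq_right h, max_eq_right (by linarith)]

theorem clampR_of_le_neg {v : ℝ} (h : v ≤ -vmax) : clampR vmax v = -vmax := by
  rw [clampR, max_eq_left (by linarith [min_le_left v vmax])]

theorem abs_sub_clampR_of_le_abs (hv : 0 ≤ vmax) {v : ℝ} (h : vmax ≤ |v|) :
    |v - clampR vmax v| = |v| - vmax := by
  rcases le_abs'.mp h with h' | h'
  · rw [clampR_of_le_neg h', abs_of_nonpos (by linarith), abs_of_nonpos (by linarith)]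
    ring
  · rw [clampR_of_le hv h', abs_of_nonneg (by linarith), abs_of_nonneg (by linarith)]

end

/-- The step size `Δ`. -/
noncomputable def quantStep (β D : ℕ) (vmax : ℝ) : ℝ := 2 * vmax / ((β : ℝ) ^ D - 1)

section

variable {β D : ℕ} {vmax : ℝ}

theorem sub_one_mul_quantStep (hβD : 1 < β ^ D) :
    ((β : ℝ) ^ D - 1) * quantStep β D vmax = 2 * vmax := by
  have : (1 : ℝ) < (β : ℝ) ^ D := by exact_mod_cast hβD
  rw [quantStep]
  field_simp [(sub_pos.mpr this).ne']

theorem quantStep_pos (hβD : 1 < β ^ D) (hv : 0 < vmax) : 0 < quantStep β D vmax := by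
  have : (1 : ℝ) < (β : ℝ) ^ D := by exact_mod_cast hβD
  unfold quantStep
  exact div_pos (by positivity) (by linarith)

theorem qidx_eq_round (hv : vmax ≠ 0) (v : ℝ) :
    qidx β D vmax v = round ((clampR vmax v + vmax) / quantStep β D vmax) := by
  rw [qidx, round_eq, quantStep]
  congr 1
  field_simp

theorem qidx_nonneg_and_lt (hβD : 1 < β ^ D) (hv : 0 < vmax) (v : ℝ) :
    0 ≤ qidx β D vmax v ∧ qidx β D vmax v < ((β ^ D : ℕ) : ℤ) := by
  have hΔ := quantStep_pos hβD hv
  set y := (clampR vmax v + vmax) / quantStep β D vmax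
  have hy₀ : 0 ≤ y := div_nonneg (by linarith [neg_le_clampR vmax v]) hΔ.le
  have hy₁ : y ≤ ((β ^ D : ℕ) : ℝ) - 1 := by
    rw [div_le_iff₀ hΔ, Nat.cast_pow, sub_one_mul_quantStep hβD]
    linarith [clampR_le hv.le v]
  obtain ⟨h₁, h₂⟩ := abs_le.mp (abs_sub_round y)
  rw [qidx_eq_round hv.ne']
  constructor
  · have : (-1 : ℝ) < round y := by linarith
    exact_mod_cast this
  · have : (round y : ℝ) < ((β ^ D : ℕ) : ℝ) := by linarith
    exact_mod_cast this

theorem quant_eq_quantStep_mul_qidx_sub (hodd : Odd β) (hβD : 1 < β ^ D) (hv : 0 < vmax)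
    (v : ℝ) : quant β D vmax v = quantStep β D vmax * qidx β D vmax v - vmax := by
  obtain ⟨h₀, hlt⟩ := qidx_nonneg_and_lt hβD hv v
  have hsum := sum_balanced_digits_mul_pow D hodd (n := (qidx β D vmax v).toNat) (by omega)
  rw [show ((qidx β D vmax v).toNat : ℝ) = qidx β D vmax v by
    exact_mod_cast Int.toNat_of_nonneg h₀] at hsum
  have : (1 : ℝ) < (β : ℝ) ^ D := by exact_mod_cast hβD
  rw [quant]
  simp only [numeral, bdigit]
  rw [hsum, quantStep]
  field_simp [(sub_pos.mpr this).ne']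

theorem clampR_sub_quant (hodd : Odd β) (hβD : 1 < β ^ D) (hv : 0 < vmax) (v : ℝ) :
    clampR vmax v - quant β D vmax v = quantStep β D vmax *
      ((clampR vmax v + vmax) / quantStep β D vmax
        - round ((clampR vmax v + vmax) / quantStep β D vmax)) := by
  rw [quant_eq_quantStep_mul_qidx_sub hodd hβD hv, qidx_eq_round hv.ne', mul_sub,
    mul_div_cancel₀ _ (quantStep_pos hβD hv).ne']
  ring

theorem abs_clampR_sub_quant_le (hodd : Odd β) (hβD : 1 < β ^ D) (hv : 0 < vmax) (v : ℝ) :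
    |clampR vmax v - quant β D vmax v| ≤ quantStep β D vmax / 2 := by
  have hΔ := quantStep_pos hβD hv
  calc |clampR vmax v - quant β D vmax v|
      ≤ quantStep β D vmax * (1 / 2) := by
        rw [clampR_sub_quant hodd hβD hv, abs_mul, abs_of_pos hΔ]
        gcongr
        exact abs_sub_round _
    _ = quantStep β D vmax / 2 := by ring

theorem quant_eq_clampR_of_le_abs (hodd : Odd β) (hβD : 1 < β ^ D) (hv : 0 < vmax) {v : ℝ}
    (h : vmax ≤ |v|) : quant β D vmax v = clampR vmax v := by
  have hΔ := quantStep_pos hβD hv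
  obtain ⟨k, hk⟩ : ∃ k : ℤ, (clampR vmax v + vmax) / quantStep β D vmax = k := by
    rcases le_abs'.mp h with h' | h'
    · exact ⟨0, by simp [clampR_of_le_neg h']⟩
    · refine ⟨(β : ℤ) ^ D - 1, ?_⟩
      rw [clampR_of_le hv.le h', div_eq_iff hΔ.ne']
      push_cast
      linarith [sub_one_mul_quantStep (vmax := vmax) hβD]
  have := clampR_sub_quant hodd hβD hv v
  rw [hk, round_intCast, sub_self, mul_zero, sub_eq_zero] at this
  exact this.symm

end

/-- For an odd integer `β ≥ 3`, `D ≥ 1` and `v_max > 0`, with `Δ = 2·v_max/(β^D − 1)`,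
the quantization error satisfies `|v − q(v)| ≤ Δ/2` for every `v` with
`|v| ≤ v_max + Δ/2`: the composition `q = f_dec ∘ f_enc` is a mid-tread uniform quantizer
with step size `Δ` on `[−v_max − Δ/2, v_max + Δ/2]`. -/
theorem quant_error_le (β D : ℕ) (hβ : 3 ≤ β) (hodd : Odd β) (hD : 1 ≤ D)
    (vmax : ℝ) (hv : 0 < vmax) (v : ℝ)
    (hvv : |v| ≤ vmax + 2 * vmax / ((β : ℝ) ^ D - 1) / 2) :
    |v - quant β D vmax v| ≤ 2 * vmax / ((β : ℝ) ^ D - 1) / 2 := by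
  have hβD : 1 < β ^ D := Nat.one_lt_pow (by omega) (by omega)
  change |v| ≤ vmax + quantStep β D vmax / 2 at hvv
  change _ ≤ quantStep β D vmax / 2
  rcases le_total |v| vmax with h | h
  · simpa only [clampR_of_abs_le h] using abs_clampR_sub_quant_le hodd hβD hv v
  · rw [quant_eq_clampR_of_le_abs hodd hβD hv h, abs_sub_clampR_of_le_abs hv.le h]
    linarith
end

section
/- Fix an odd integer β ≥ 3 and integers D ≥ 1, K ≥ 1, R ≥ 1, a real σ² ≥ 0, and a real v_max > 0; let ξ = (β^D − 1)/2 and E_s = β − 1. Let X_{i,ℓ}, for i ∈ {0,…,D−1} and ℓ ∈ {0,…,β−2}, be random variables each having binomial distribution with K trials and success probability 1/β. Then E[(v_max²/(ξ²·R·K²))·Σ_{i=0}^{D−1} Σ_{ℓ=0}^{β−2} f_bal(ℓ)²·(X_{i,ℓ} + σ²/E_s)²·β^{2i}] = (v_max²/(3R))·(1/β + (1/K)·((β−1)/β + 2σ²/(β−1)) + β·σ⁴/(K²·(β−1)²))·((β^D + 1)/(β^D − 1)). -/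
/-!
Each count is `Bin(K, 1/β)`, so by the Bernstein-polynomial identities for the first two moments
`E[(X + c)²] = Kp(1 - p) + (Kp + c)²` with `p = 1/β`. By linearity the expected double sum then
factors as `(∑_ℓ f_bal(ℓ)²) · E[(X + c)²] · ∑_i β^{2i}`. Since `f_bal` takes each of the values
`±1, …, ±(β - 1)/2` exactly once, `∑_ℓ f_bal(ℓ)² = β(β² - 1)/12`, and the geometric sum is
`(β^{2D} - 1)/(β² - 1)`; the rest is field arithmetic.
-/

open Finset MeasureTheory ProbabilityTheory
open scoped unitInterval

/-- The balanced symbol map of a balanced base-`β` number system. -/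
def fbal (β : ℕ) (j : ℕ) : ℤ :=
  if j = β - 1 then 0
  else if j % 2 = 1 then -(((j : ℤ) + 1) / 2)
  else ((j : ℤ) + 2) / 2

open Polynomial in
lemma sum_range_add_sq_mul_bernsteinPolynomial_eval (n : ℕ) (p c : ℝ) :
    ∑ k ∈ range (n + 1), ((k : ℝ) + c) ^ 2 * (bernsteinPolynomial ℝ n k).eval p
      = n * p * (1 - p) + (n * p + c) ^ 2 := by
  have h₀ := congrArg (eval p) (bernsteinPolynomial.sum ℝ n)
  have h₁ := congrArg (eval p) (bernsteinPolynomial.sum_smul ℝ n)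
  have h₂ := congrArg (eval p) (bernsteinPolynomial.variance ℝ n)
  simp only [eval_finsetSum, eval_mul, eval_pow, eval_sub, eval_natCast, eval_X,
    eval_one, nsmul_eq_mul] at h₀ h₁ h₂
  have hsplit : ∀ k : ℕ, ((k : ℝ) + c) ^ 2 * (bernsteinPolynomial ℝ n k).eval p
      = (n * p - k) ^ 2 * (bernsteinPolynomial ℝ n k).eval p
        + 2 * (n * p + c) * (k * (bernsteinPolynomial ℝ n k).eval p)
        + (c ^ 2 - (n * p) ^ 2) * (bernsteinPolynomial ℝ n k).eval p := fun k => by ring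
  simp only [hsplit, sum_add_distrib, ← mul_sum, h₀, h₁, h₂]
  ring

lemma integral_add_sq_binomial (n : ℕ) (p : I) (c : ℝ) :
    ∫ k, ((k : ℝ) + c) ^ 2 ∂Bin(n, p) = n * p * (1 - p) + (n * p + c) ^ 2 := by
  rw [integral_binomial, ← Nat.range_succ_eq_Iic, ← sum_range_add_sq_mul_bernsteinPolynomial_eval]
  refine sum_congr rfl fun k _ => ?_
  simp [bernsteinPolynomial, mul_comm]

lemma hasLaw_binomial_of_measure_eq {Ω : Type*} [MeasurableSpace Ω] {P : Measure Ω}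
    {X : Ω → ℕ} (hX : Measurable X) {n : ℕ} {p : I}
    (h : ∀ k : ℕ, P {ω | X ω = k} = ENNReal.ofReal (n.choose k * (p : ℝ) ^ k * (1 - p) ^ (n - k))) :
    HasLaw X Bin(n, p) P where
  map_eq := Measure.ext_of_singleton fun k => by
    rw [Measure.map_apply hX (measurableSet_singleton k), binomial_singleton]
    exact h k

lemma fbal_sq_of_lt {β j : ℕ} (hj : j < β - 1) :
    (fbal β j : ℝ) ^ 2 = (((j / 2 : ℕ) : ℝ) + 1) ^ 2 := by
  have h : fbal β j = -((j / 2 : ℕ) + 1 : ℤ) ∨ fbal β j = (j / 2 : ℕ) + 1 := by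
    unfold fbal
    split_ifs <;> omega
  rcases h with h | h <;>
    simp only [h, Int.cast_neg, Int.cast_add, Int.cast_natCast, Int.cast_one, neg_sq]

lemma sum_range_sq_div_two_add_one (m : ℕ) :
    ∑ j ∈ range (2 * m), (((j / 2 : ℕ) : ℝ) + 1) ^ 2 = (m : ℝ) * (m + 1) * (2 * m + 1) / 3 := by
  induction m with
  | zero => simp
  | succ m ih =>
    rw [show 2 * (m + 1) = 2 * m + 1 + 1 by ring, sum_range_succ, sum_range_succ, ih,
      show 2 * m / 2 = m by omega, show (2 * m + 1) / 2 = m by omega]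
    push_cast
    ring

lemma sum_range_fbal_sq {β : ℕ} (hβ : Odd β) :
    ∑ j ∈ range (β - 1), (fbal β j : ℝ) ^ 2 = β * (β ^ 2 - 1) / 12 := by
  obtain ⟨m, rfl⟩ := hβ
  rw [sum_congr rfl fun j hj => fbal_sq_of_lt (mem_range.1 hj), Nat.add_sub_cancel,
    sum_range_sq_div_two_add_one]
  push_cast
  ring

section

variable {Ω : Type*} [MeasurableSpace Ω] {P : Measure Ω} {X : Ω → ℕ} {n : ℕ} {p : I}

lemma integrable_comp_of_hasLaw_binomial (hX : HasLaw X Bin(n, p) P) (f : ℕ → ℝ) :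
    Integrable (fun ω => f (X ω)) P :=
  (integrable_map_measure (by fun_prop) hX.aemeasurable).1 (hX.map_eq ▸ integrable_binomial f)

lemma integral_add_sq_of_hasLaw_binomial (hX : HasLaw X Bin(n, p) P) (c : ℝ) :
    ∫ ω, ((X ω : ℝ) + c) ^ 2 ∂P = n * p * (1 - p) + (n * p + c) ^ 2 := by
  rw [← integral_add_sq_binomial, ← hX.integral_comp (by fun_prop)]
  rfl

end

open MeasureTheory in
theorem channel_mse_closed_form_general {Ω : Type*} [MeasurableSpace Ω]
    (P : Measure Ω) [IsProbabilityMeasure P]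
    (β D K R : ℕ) (hβ : 3 ≤ β) (hodd : Odd β) (hD : 1 ≤ D) (hK : 1 ≤ K) (hR : 1 ≤ R)
    (σ2 vmax : ℝ)
    (X : Fin D → Fin (β - 1) → Ω → ℕ) (hXmeas : ∀ i ℓ, Measurable (X i ℓ))
    (hlaw : ∀ i ℓ, ∀ k : ℕ, P {ω | X i ℓ ω = k} =
      ENNReal.ofReal ((K.choose k : ℝ) * (1 / (β : ℝ)) ^ k * (1 - 1 / (β : ℝ)) ^ (K - k))) :
    ∫ ω, vmax ^ 2 / ((((β : ℝ) ^ D - 1) / 2) ^ 2 * (R : ℝ) * (K : ℝ) ^ 2) *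
        ∑ i : Fin D, ∑ ℓ : Fin (β - 1),
          (fbal β ℓ : ℝ) ^ 2 * ((X i ℓ ω : ℝ) + σ2 / ((β : ℝ) - 1)) ^ 2 *
            (β : ℝ) ^ (2 * (i : ℕ)) ∂P
      = vmax ^ 2 / (3 * (R : ℝ)) *
          (1 / (β : ℝ) + 1 / (K : ℝ) * (((β : ℝ) - 1) / (β : ℝ) + 2 * σ2 / ((β : ℝ) - 1))
            + (β : ℝ) * σ2 ^ 2 / ((K : ℝ) ^ 2 * ((β : ℝ) - 1) ^ 2)) *
          (((β : ℝ) ^ D + 1) / ((β : ℝ) ^ D - 1)) := by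
  have hβ₁ : (1 : ℝ) < β := by exact_mod_cast (by omega : 1 < β)
  set c := σ2 / ((β : ℝ) - 1) with hc
  set M := K * (1 / β) * (1 - 1 / β) + (K * (1 / β) + c) ^ 2 with hM
  have hbin : ∀ i ℓ, HasLaw (X i ℓ) Bin(K, ⟨1 / β, by positivity, by bound⟩) P := fun i ℓ =>
    hasLaw_binomial_of_measure_eq (hXmeas i ℓ) (hlaw i ℓ)
  have hE : ∫ ω, ∑ i : Fin D, ∑ ℓ : Fin (β - 1),
      (fbal β ℓ : ℝ) ^ 2 * ((X i ℓ ω : ℝ) + c) ^ 2 * (β : ℝ) ^ (2 * (i : ℕ)) ∂P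
      = ∑ i : Fin D, ∑ ℓ : Fin (β - 1), (fbal β ℓ : ℝ) ^ 2 * M * (β : ℝ) ^ (2 * (i : ℕ)) := by
    have hint : ∀ i ℓ, Integrable (fun ω => ((X i ℓ ω : ℝ) + c) ^ 2) P := fun i ℓ =>
      integrable_comp_of_hasLaw_binomial (hbin i ℓ) fun k => ((k : ℝ) + c) ^ 2
    rw [integral_finsetSum _ fun i _ => integrable_finsetSum _ fun ℓ _ =>
      ((hint i ℓ).const_mul _).mul_const _]
    refine sum_congr rfl fun i _ => ?_
    rw [integral_finsetSum _ fun ℓ _ => ((hint i ℓ).const_mul _).mul_const _]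
    refine sum_congr rfl fun ℓ _ => ?_
    rw [integral_mul_const, integral_const_mul, integral_add_sq_of_hasLaw_binomial (hbin i ℓ)]
  have hsplit : ∑ i : Fin D, ∑ ℓ : Fin (β - 1), (fbal β ℓ : ℝ) ^ 2 * M * (β : ℝ) ^ (2 * (i : ℕ))
      = (∑ j ∈ range (β - 1), (fbal β j : ℝ) ^ 2) * M * ∑ i ∈ range D, ((β : ℝ) ^ 2) ^ i := by
    rw [← Fin.sum_univ_eq_sum_range (fun j => (fbal β j : ℝ) ^ 2),
      ← Fin.sum_univ_eq_sum_range (fun i => ((β : ℝ) ^ 2) ^ i), sum_mul, sum_mul_sum, sum_comm]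
    simp_rw [← pow_mul]
  rw [integral_const_mul, hE, hsplit, sum_range_fbal_sq hodd, geom_sum_eq (by nlinarith), hM, hc,
    ← pow_mul, mul_comm 2 D, pow_mul]
  have hβ_sub_one : (β : ℝ) - 1 ≠ 0 := by linarith
  have hβ_sq_sub_one : (β : ℝ) ^ 2 - 1 ≠ 0 := by nlinarith
  have hβD_sub_one : (β : ℝ) ^ D - 1 ≠ 0 := by linarith [one_lt_pow₀ hβ₁ (by omega : D ≠ 0)]
  have hK₀ : (K : ℝ) ≠ 0 := by positivity
  have hR₀ : (R : ℝ) ≠ 0 := by positivity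
  field_simp
  ring

open MeasureTheory in
/-- Closed form of the channel-induced mean squared error `σ²_channel`: with `ξ = (β^D−1)/2`
and `E_s = β − 1`, if the activation counts `X_{i,ℓ}` are `Binomial(K, 1/β)`, then
`E[(v_max²/(ξ²·R·K²))·Σ_i Σ_ℓ f_bal(ℓ)²·(X_{i,ℓ} + σ²/E_s)²·β^{2i}]` equals
`(v_max²/(3R))·(1/β + (1/K)·((β−1)/β + 2σ²/(β−1)) + β·σ⁴/(K²·(β−1)²))·((β^D+1)/(β^D−1))`. -/
theorem channel_mse_closed_form {Ω : Type*} [MeasurableSpace Ω]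
    (P : Measure Ω) [IsProbabilityMeasure P]
    (β D K R : ℕ) (hβ : 3 ≤ β) (hodd : Odd β) (hD : 1 ≤ D) (hK : 1 ≤ K) (hR : 1 ≤ R)
    (σ2 vmax : ℝ) (hσ : 0 ≤ σ2) (hv : 0 < vmax)
    (X : Fin D → Fin (β - 1) → Ω → ℕ) (hXmeas : ∀ i ℓ, Measurable (X i ℓ))
    (hlaw : ∀ i ℓ, ∀ k : ℕ, P {ω | X i ℓ ω = k} =
      ENNReal.ofReal ((K.choose k : ℝ) * (1 / (β : ℝ)) ^ k * (1 - 1 / (β : ℝ)) ^ (K - k))) :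
    ∫ ω, vmax ^ 2 / ((((β : ℝ) ^ D - 1) / 2) ^ 2 * (R : ℝ) * (K : ℝ) ^ 2) *
        ∑ i : Fin D, ∑ ℓ : Fin (β - 1),
          (fbal β ℓ : ℝ) ^ 2 * ((X i ℓ ω : ℝ) + σ2 / ((β : ℝ) - 1)) ^ 2 *
            (β : ℝ) ^ (2 * (i : ℕ)) ∂P
      = vmax ^ 2 / (3 * (R : ℝ)) *
          (1 / (β : ℝ) + 1 / (K : ℝ) * (((β : ℝ) - 1) / (β : ℝ) + 2 * σ2 / ((β : ℝ) - 1))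
            + (β : ℝ) * σ2 ^ 2 / ((K : ℝ) ^ 2 * ((β : ℝ) - 1) ^ 2)) *
          (((β : ℝ) ^ D + 1) / ((β : ℝ) ^ D - 1)) :=
  channel_mse_closed_form_general P β D K R hβ hodd hD hK hR σ2 vmax X hXmeas hlaw
end

section
/- Let (Ω, 𝔉, P) be a probability space, Q ≥ 1 an integer, and F : ℝ^Q → ℝ a differentiable function whose gradient ∇F is L-Lipschitz with respect to the Euclidean norm for some L > 0, and which is bounded below: F(w) ≥ F* for all w. Let η > 0 satisfy η·L < 2, let B ≥ 0, let T ≥ 1, let w_0 ∈ ℝ^Q be deterministic, and let ĝ_0, …, ĝ_{T−1} : Ω → ℝ^Q be random vectors with ‖ĝ_t‖² integrable; define iterates w_{t+1} = w_t − η·ĝ_t. Assume for each t ∈ {0,…,T−1}: (i) E[⟨∇F(w_t), ĝ_t⟩] = E[‖∇F(w_t)‖²], and (ii) E[‖ĝ_t‖²] ≤ E[‖∇F(w_t)‖²] + B. Then (1/T)·Σ_{t=0}^{T−1} E[‖∇F(w_t)‖²] ≤ (F(w_0) − F*)/(T·η·(1 − η·L/2)) + ((η·L/2)/(1 − η·L/2))·B.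 -/
/-!
For an `L`-smooth `F` the descent lemma `F (x - η • g) ≤ F x - η ⟪∇F x, g⟫ + L η² / 2 ‖g‖²`
holds pointwise. Taking expectations and using (i) and (ii), each step lowers `E[F (w t)]` by
at least `η (1 - η L / 2) E‖∇F (w t)‖²`, up to the error `η² L / 2 · B`. Summing over `t`
telescopes, and `F ≥ F*` bounds the total decrease by `F w₀ - F*`. All expectations are finite
because the iterates are square integrable, `∇F` is Lipschitz and `F` grows at most quadratically.
-/

open MeasureTheory RealInnerProductSpace Finset

section Smooth

variable {E : Type*} [NormedAddCommGroup E] [InnerProductSpace ℝ E] [CompleteSpace E]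
  {F : E → ℝ} {L : ℝ}

theorem hasDerivAt_comp_add_smul (hF : Differentiable ℝ F) (x v : E) (s : ℝ) :
    HasDerivAt (fun s : ℝ => F (x + s • v)) ⟪gradient F (x + s • v), v⟫ s := by
  have hline : HasDerivAt (fun s : ℝ => x + s • v) v s := by
    simpa using ((hasDerivAt_id s).smul_const v).const_add x
  rw [inner_gradient_left]
  exact (hF _).hasFDerivAt.comp_hasDerivAt s hline

theorem abs_sub_sub_inner_gradient_le (hF : Differentiable ℝ F)
    (hlip : ∀ x y, ‖gradient F x - gradient F y‖ ≤ L * ‖x - y‖) (x v : E) :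
    |F (x + v) - F x - ⟪gradient F x, v⟫| ≤ L / 2 * ‖v‖ ^ 2 := by
  have hrem : ∀ s : ℝ, HasDerivAt (fun s : ℝ => F (x + s • v) - F x - s * ⟪gradient F x, v⟫)
      ⟪gradient F (x + s • v) - gradient F x, v⟫ s := fun s => by
    rw [inner_sub_left]
    exact ((hasDerivAt_comp_add_smul hF x v s).sub_const (F x)).sub (hasDerivAt_mul_const _)
  have hbound : ∀ s : ℝ, HasDerivAt (fun s : ℝ => L / 2 * s ^ 2 * ‖v‖ ^ 2)
      (L * s * ‖v‖ ^ 2) s := fun s =>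
    (((hasDerivAt_pow 2 s).const_mul (L / 2)).mul_const (‖v‖ ^ 2)).congr_deriv (by push_cast; ring)
  -- compare the remainder with `s ↦ L / 2 * s ^ 2 * ‖v‖ ^ 2`, whose derivative dominates its own
  have key := image_norm_le_of_norm_deriv_right_le_deriv_boundary (a := 0) (b := 1)
    (fun s _ => (hrem s).continuousAt.continuousWithinAt) (fun s _ => (hrem s).hasDerivWithinAt)
    (by simp) hbound (fun s hs => ?_) (Set.right_mem_Icc.2 zero_le_one)
  · simpa using key
  calc ‖⟪gradient F (x + s • v) - gradient F x, v⟫‖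
      ≤ ‖gradient F (x + s • v) - gradient F x‖ * ‖v‖ := norm_inner_le_norm _ _
    _ ≤ L * ‖s • v‖ * ‖v‖ := by
      gcongr
      simpa using hlip (x + s • v) x
    _ = L * s * ‖v‖ ^ 2 := by rw [norm_smul, Real.norm_of_nonneg hs.1]; ring

end Smooth

namespace MeasureTheory

variable {Ω E : Type*} [MeasurableSpace Ω] {μ : Measure Ω}
  [NormedAddCommGroup E] [InnerProductSpace ℝ E]

theorem MemLp.integrable_inner {f g : Ω → E} (hf : MemLp f 2 μ) (hg : MemLp g 2 μ) :
    Integrable (fun ω => ⟪f ω, g ω⟫) μ :=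
  (L2.integrable_inner (hf.toLp f) (hg.toLp g)).congr <| by
    filter_upwards [hf.coeFn_toLp, hg.coeFn_toLp] with ω hfω hgω
    rw [hfω, hgω]

end MeasureTheory

theorem LipschitzWith.memLp_comp {Ω E F : Type*} [MeasurableSpace Ω] {μ : Measure Ω}
    [IsFiniteMeasure μ] [NormedAddCommGroup E] [NormedAddCommGroup F]
    {K : NNReal} {f : E → F} {X : Ω → E} {p : ENNReal} (hf : LipschitzWith K f)
    (hX : MemLp X p μ) : MemLp (fun ω => f (X ω)) p μ := by
  have hshift : LipschitzWith K (fun x => f x - f 0) := LipschitzWith.of_dist_le_mul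
    fun x y => by simpa only [dist_sub_right] using hf.dist_le_mul x y
  convert (hshift.comp_memLp (sub_self _) hX).add (memLp_const (f 0)) using 1
  ext ω
  simp

section ExpectedDescent

variable {Ω E : Type*} [MeasurableSpace Ω] {μ : Measure Ω} [IsFiniteMeasure μ]
  [NormedAddCommGroup E] [InnerProductSpace ℝ E] [CompleteSpace E] {F : E → ℝ} {L : ℝ}

theorem integrable_comp_of_lipschitz_gradient (hF : Differentiable ℝ F)
    (hlip : ∀ x y, ‖gradient F x - gradient F y‖ ≤ L * ‖x - y‖) {X : Ω → E}
    (hX : MemLp X 2 μ) : Integrable (fun ω => F (X ω)) μ := by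
  have hbound : ∀ y, ‖F y‖ ≤ |F 0| + ‖gradient F 0‖ * ‖y‖ + L / 2 * ‖y‖ ^ 2 := fun y => by
    have hrem := abs_le.1 (by simpa only [zero_add] using abs_sub_sub_inner_gradient_le hF hlip 0 y)
    have hinner := abs_le.1 (abs_real_inner_le_norm (gradient F 0) y)
    rw [Real.norm_eq_abs, abs_le]
    constructor <;> linarith [neg_abs_le (F 0), le_abs_self (F 0)]
  refine Integrable.mono' ?_ (hF.continuous.comp_aestronglyMeasurable hX.1)
    (ae_of_all _ fun ω => hbound (X ω))
  exact ((integrable_const _).add ((hX.integrable one_le_two).norm.const_mul _)).add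
    (hX.norm.integrable_sq.const_mul _)

theorem integral_comp_sub_smul_le (hF : Differentiable ℝ F)
    (hlip : ∀ x y, ‖gradient F x - gradient F y‖ ≤ L * ‖x - y‖) {X G : Ω → E}
    (hX : MemLp X 2 μ) (hG : MemLp G 2 μ) (η : ℝ) :
    ∫ ω, F (X ω - η • G ω) ∂μ ≤ ∫ ω, F (X ω) ∂μ - η * ∫ ω, ⟪gradient F (X ω), G ω⟫ ∂μ
      + L / 2 * η ^ 2 * ∫ ω, ‖G ω‖ ^ 2 ∂μ := by
  have hgrad : MemLp (fun ω => gradient F (X ω)) 2 μ :=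
    (LipschitzWith.of_dist_le' fun x y => by simpa only [dist_eq_norm] using hlip x y).memLp_comp hX
  have hpoint : ∀ ω, F (X ω - η • G ω)
      ≤ F (X ω) - η * ⟪gradient F (X ω), G ω⟫ + L / 2 * η ^ 2 * ‖G ω‖ ^ 2 := fun ω => by
    have := (abs_le.1 (abs_sub_sub_inner_gradient_le hF hlip (X ω) (-(η • G ω)))).2
    rw [← sub_eq_add_neg, inner_neg_right, real_inner_smul_right, norm_neg, norm_smul, mul_pow,
      Real.norm_eq_abs, sq_abs] at this
    linarith
  have hint_F := integrable_comp_of_lipschitz_gradient hF hlip hX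
  have hint_inner := (hgrad.integrable_inner hG).const_mul η
  have hint_sq := hG.norm.integrable_sq.const_mul (L / 2 * η ^ 2)
  have hint_diff : Integrable (fun ω => F (X ω) - η * ⟪gradient F (X ω), G ω⟫) μ :=
    hint_F.sub hint_inner
  calc ∫ ω, F (X ω - η • G ω) ∂μ
      ≤ ∫ ω, (F (X ω) - η * ⟪gradient F (X ω), G ω⟫ + L / 2 * η ^ 2 * ‖G ω‖ ^ 2) ∂μ :=
        integral_mono (integrable_comp_of_lipschitz_gradient hF hlip (hX.sub (hG.const_smul η)))
          (hint_diff.add hint_sq) hpoint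
    _ = _ := by
      rw [integral_add hint_diff hint_sq, integral_sub hint_F hint_inner,
        integral_const_mul, integral_const_mul]

end ExpectedDescent

theorem mul_sum_le_of_descent {a s : ℕ → ℝ} {c d m : ℝ} {T : ℕ}
    (hstep : ∀ t < T, a (t + 1) ≤ a t - c * s t + d) (hlow : m ≤ a T) :
    c * ∑ t ∈ range T, s t ≤ a 0 - m + T * d := by
  have htele : ∑ t ∈ range T, (c * s t - d) ≤ ∑ t ∈ range T, (a t - a (t + 1)) :=
    sum_le_sum fun t ht => by linarith [hstep t (mem_range.1 ht)]
  rw [sum_range_sub', sum_sub_distrib, ← mul_sum, sum_const, card_range, nsmul_eq_mul] at htele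
  linarith

open MeasureTheory RealInnerProductSpace in
theorem sgd_convergence_rate_general {Ω : Type*} [MeasurableSpace Ω]
    (P : Measure Ω) [IsProbabilityMeasure P] (Q : ℕ)
    (F : EuclideanSpace ℝ (Fin Q) → ℝ) (Fstar L : ℝ) (hL : 0 < L)
    (hdiff : Differentiable ℝ F)
    (hlip : ∀ x y, ‖gradient F x - gradient F y‖ ≤ L * ‖x - y‖)
    (hbound : ∀ w, Fstar ≤ F w)
    (η : ℝ) (hη : 0 < η) (hηL : η * L < 2)
    (B : ℝ) (T : ℕ) (hT : 1 ≤ T)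
    (w0 : EuclideanSpace ℝ (Fin Q))
    (g : ℕ → Ω → EuclideanSpace ℝ (Fin Q))
    (hgmeas : ∀ t, Measurable (g t))
    (hgint : ∀ t, Integrable (fun ω => ‖g t ω‖ ^ 2) P)
    (w : ℕ → Ω → EuclideanSpace ℝ (Fin Q))
    (hw0 : ∀ ω, w 0 ω = w0)
    (hwrec : ∀ t ω, w (t + 1) ω = w t ω - η • g t ω)
    (hunbiased : ∀ t < T, ∫ ω, ⟪gradient F (w t ω), g t ω⟫ ∂P
      = ∫ ω, ‖gradient F (w t ω)‖ ^ 2 ∂P)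
    (hsecond : ∀ t < T, ∫ ω, ‖g t ω‖ ^ 2 ∂P
      ≤ (∫ ω, ‖gradient F (w t ω)‖ ^ 2 ∂P) + B) :
    1 / (T : ℝ) * ∑ t ∈ Finset.range T, ∫ ω, ‖gradient F (w t ω)‖ ^ 2 ∂P
      ≤ (F w0 - Fstar) / ((T : ℝ) * η * (1 - η * L / 2))
        + (η * L / 2) / (1 - η * L / 2) * B := by
  have hg : ∀ t, MemLp (g t) 2 P := fun t =>
    (memLp_two_iff_integrable_sq_norm (hgmeas t).aestronglyMeasurable).2 (hgint t)
  have hw : ∀ t, MemLp (w t) 2 P := by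
    intro t
    induction t with
    | zero => rw [funext hw0]; exact memLp_const w0
    | succ t ih => rw [funext (hwrec t)]; exact ih.sub ((hg t).const_smul η)
  have hstep : ∀ t < T, ∫ ω, F (w (t + 1) ω) ∂P ≤ ∫ ω, F (w t ω) ∂P
      - η * (1 - η * L / 2) * ∫ ω, ‖gradient F (w t ω)‖ ^ 2 ∂P + η ^ 2 * L / 2 * B := by
    intro t ht
    have hdescent := integral_comp_sub_smul_le hdiff hlip (hw t) (hg t) η
    simp only [← hwrec, hunbiased t ht] at hdescent
    nlinarith [mul_le_mul_of_nonneg_left (hsecond t ht) (by positivity : 0 ≤ L / 2 * η ^ 2)]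
  have hlow : Fstar ≤ ∫ ω, F (w T ω) ∂P := by
    simpa using integral_mono (integrable_const Fstar)
      (integrable_comp_of_lipschitz_gradient hdiff hlip (hw T)) fun ω => hbound (w T ω)
  have hsum := mul_sum_le_of_descent (a := fun t => ∫ ω, F (w t ω) ∂P)
    (s := fun t => ∫ ω, ‖gradient F (w t ω)‖ ^ 2 ∂P) hstep hlow
  simp only [hw0, integral_const, probReal_univ, one_smul] at hsum
  have hc : 0 < 1 - η * L / 2 := by linarith
  calc 1 / (T : ℝ) * ∑ t ∈ Finset.range T, ∫ ω, ‖gradient F (w t ω)‖ ^ 2 ∂P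
      = η * (1 - η * L / 2) * (∑ t ∈ Finset.range T, ∫ ω, ‖gradient F (w t ω)‖ ^ 2 ∂P)
        / ((T : ℝ) * η * (1 - η * L / 2)) := by field_simp [(sub_pos.2 hηL).ne']
    _ ≤ (F w0 - Fstar + T * (η ^ 2 * L / 2 * B)) / ((T : ℝ) * η * (1 - η * L / 2)) := by
      gcongr
    _ = _ := by field_simp

open MeasureTheory RealInnerProductSpace in
/-- Convergence rate of distributed training with a fixed learning rate `η` under
stochastic gradient aggregation with unbiased aggregated gradients (i) and bounded
second moment (ii):
`(1/T)·Σ_t E[‖∇F(w_t)‖²] ≤ (F(w_0) − F*)/(T·η·(1 − η·L/2)) + ((η·L/2)/(1 − η·L/2))·B`. -/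
theorem sgd_convergence_rate {Ω : Type*} [MeasurableSpace Ω]
    (P : Measure Ω) [IsProbabilityMeasure P] (Q : ℕ) (hQ : 1 ≤ Q)
    (F : EuclideanSpace ℝ (Fin Q) → ℝ) (Fstar L : ℝ) (hL : 0 < L)
    (hdiff : Differentiable ℝ F)
    (hlip : ∀ x y, ‖gradient F x - gradient F y‖ ≤ L * ‖x - y‖)
    (hbound : ∀ w, Fstar ≤ F w)
    (η : ℝ) (hη : 0 < η) (hηL : η * L < 2)
    (B : ℝ) (hB : 0 ≤ B) (T : ℕ) (hT : 1 ≤ T)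
    (w0 : EuclideanSpace ℝ (Fin Q))
    (g : ℕ → Ω → EuclideanSpace ℝ (Fin Q))
    (hgmeas : ∀ t, Measurable (g t))
    (hgint : ∀ t, Integrable (fun ω => ‖g t ω‖ ^ 2) P)
    (w : ℕ → Ω → EuclideanSpace ℝ (Fin Q))
    (hw0 : ∀ ω, w 0 ω = w0)
    (hwrec : ∀ t ω, w (t + 1) ω = w t ω - η • g t ω)
    (hunbiased : ∀ t < T, ∫ ω, ⟪gradient F (w t ω), g t ω⟫ ∂P
      = ∫ ω, ‖gradient F (w t ω)‖ ^ 2 ∂P)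
    (hsecond : ∀ t < T, ∫ ω, ‖g t ω‖ ^ 2 ∂P
      ≤ (∫ ω, ‖gradient F (w t ω)‖ ^ 2 ∂P) + B) :
    1 / (T : ℝ) * ∑ t ∈ Finset.range T, ∫ ω, ‖gradient F (w t ω)‖ ^ 2 ∂P
      ≤ (F w0 - Fstar) / ((T : ℝ) * η * (1 - η * L / 2))
        + (η * L / 2) / (1 - η * L / 2) * B :=
  sgd_convergence_rate_general P Q F Fstar L hL hdiff hlip hbound η hη hηL B T hT w0 g hgmeas hgint
    w hw0 hwrec hunbiased hsecond
end
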